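/- arXiv:math-ph/0605070 — 2 statements merged into one kernel-verified Lean document; each statement's English description precedes it below -/
import Mathlib

section
/- Let Φ : [0,∞) → [0,∞) be C¹, strictly convex, Φ(0)=Φ'(0)=0, superlinear at infinity, extended by +∞ on (-∞,0). For r ≥ 0 define Ψ(r) := inf over g ∈ L¹₊(ℝ²) with ∫g = r of ∫_{ℝ²} ((1/2)|v|² g(v) + Φ(g(v))) dv, extended by +∞ on (-∞,0). Then for every λ ∈ ℝ the Legendre transform satisfies Ψ*(λ) = ∫_{ℝ²} Φ*(λ - |v|²/2) dv, where h*(λ) := sup_{r∈ℝ}(λr - h(r)). -/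
open MeasureTheory Real Set Filter

noncomputable section

abbrev E2 := EuclideanSpace ℝ (Fin 2)

/-- Legendre transform of a function extended by +∞ on the negative half-line,
so the supremum is effectively taken over r ≥ 0. -/
def legendre (h : ℝ → ℝ) (lam : ℝ) : ℝ :=
  sSup {y : ℝ | ∃ r : ℝ, 0 ≤ r ∧ y = lam * r - h r}

/-- The reduced function Ψ obtained from Φ by minimizing over velocity profiles. -/
def redPsi (Φ : ℝ → ℝ) (r : ℝ) : ℝ :=
  sInf {y : ℝ | ∃ g : E2 → ℝ, (∀ v, 0 ≤ g v) ∧ Integrable g ∧ (∫ v, g v) = r ∧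
    Integrable (fun v : E2 => (1/2) * ‖v‖^2 * g v + Φ (g v)) ∧
    y = ∫ v : E2, ((1/2) * ‖v‖^2 * g v + Φ (g v))}

/-!
Let `G μ` be the least `s ≥ 0` with `μ ≤ Φ' s`. Since `Φ'` is continuous, `Φ' 0 = 0` and
`Φ' → ∞`, we have `Φ' (G μ) = μ` for `μ ≥ 0` and `G μ = 0` for `μ ≤ 0`; the tangent-line
inequality of the convex `Φ` then shows that `r = G μ` maximizes `μ r - Φ r`, so
`Φ* μ = μ G μ - Φ (G μ)`.

For an admissible profile `g` of mass `r`, the Fenchel–Young inequality applied pointwise gives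
`λ r - ∫ (|v|²/2 g + Φ g) = ∫ ((λ - |v|²/2) g - Φ g) ≤ ∫ Φ* (λ - |v|²/2)`, hence
`λ r - Ψ r ≤ ∫ Φ* (λ - |v|²/2)`. The profile `g v = G (λ - |v|²/2)` is bounded and vanishes
outside a ball, so it is admissible, and it turns every pointwise inequality into an equality.
-/

theorem ConvexOn.add_mul_sub_le_of_hasDerivWithinAt {S : Set ℝ} {f : ℝ → ℝ} {f' x y : ℝ}
    (hf : ConvexOn ℝ S f) (hx : x ∈ S) (hy : y ∈ S) (hf' : HasDerivWithinAt f f' S x) :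
    f x + f' * (y - x) ≤ f y := by
  rcases lt_trichotomy x y with hxy | rfl | hxy
  · have := hf.le_slope_of_hasDerivWithinAt hx hy hxy hf'
    rw [slope_def_field, le_div_iff₀ (sub_pos.2 hxy)] at this
    linarith
  · simp
  · have := hf.slope_le_of_hasDerivWithinAt hy hx hxy hf'
    rw [slope_def_field, div_le_iff₀ (sub_pos.2 hxy)] at this
    linarith

section LowerInv

def lowerInv (f : ℝ → ℝ) (μ : ℝ) : ℝ := sInf {s : ℝ | 0 ≤ s ∧ μ ≤ f s}

variable {f : ℝ → ℝ}

theorem lowerInv_nonneg (f : ℝ → ℝ) (μ : ℝ) : 0 ≤ lowerInv f μ :=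
  Real.sInf_nonneg fun _ hs => hs.1

theorem lowerInv_eq_zero_of_le {μ : ℝ} (hμ : μ ≤ f 0) : lowerInv f μ = 0 :=
  le_antisymm (csInf_le ⟨0, fun _ hs => hs.1⟩ ⟨le_rfl, hμ⟩) (lowerInv_nonneg f μ)

theorem nonempty_setOf_le_of_tendsto (hf : Tendsto f atTop atTop) (μ : ℝ) :
    {s : ℝ | 0 ≤ s ∧ μ ≤ f s}.Nonempty :=
  let ⟨s, hμ, hs⟩ := ((hf.eventually_ge_atTop μ).and (eventually_ge_atTop 0)).exists
  ⟨s, hs, hμ⟩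

theorem monotone_lowerInv (hf : Tendsto f atTop atTop) : Monotone (lowerInv f) :=
  fun _ b hab => csInf_le_csInf ⟨0, fun _ hs => hs.1⟩ (nonempty_setOf_le_of_tendsto hf b)
    fun _ hs => ⟨hs.1, hab.trans hs.2⟩

theorem apply_lowerInv (hcont : ContinuousOn f (Ici 0)) (htop : Tendsto f atTop atTop)
    {μ : ℝ} (hμ : f 0 ≤ μ) : f (lowerInv f μ) = μ := by
  set s := lowerInv f μ
  have hclosed : IsClosed {s : ℝ | 0 ≤ s ∧ μ ≤ f s} :=
    hcont.preimage_isClosed_of_isClosed isClosed_Ici isClosed_Ici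
  have hs : 0 ≤ s ∧ μ ≤ f s :=
    hclosed.csInf_mem (nonempty_setOf_le_of_tendsto htop μ) ⟨0, fun _ hs => hs.1⟩
  obtain ⟨c, hc, hfc⟩ := intermediate_value_Icc hs.1 (hcont.mono Icc_subset_Ici_self) ⟨hμ, hs.2⟩
  have hsc : s ≤ c := csInf_le ⟨0, fun _ hs => hs.1⟩ ⟨hc.1, hfc.ge⟩
  rwa [le_antisymm hc.2 hsc] at hfc

end LowerInv

section Legendre

variable {Φ Φ' : ℝ → ℝ}

def legendreValues (h : ℝ → ℝ) (μ : ℝ) : Set ℝ := {y : ℝ | ∃ r : ℝ, 0 ≤ r ∧ y = μ * r - h r}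

theorem legendre_eq_sSup (h : ℝ → ℝ) (μ : ℝ) : legendre h μ = sSup (legendreValues h μ) := rfl

theorem monotone_legendre (hbdd : ∀ μ, BddAbove (legendreValues Φ μ)) : Monotone (legendre Φ) :=
  fun μ μ' hμ => csSup_le ⟨_, 0, le_rfl, rfl⟩ fun _ ⟨r, hr, hy⟩ =>
    (le_csSup (hbdd μ') ⟨r, hr, rfl⟩).trans' (by nlinarith)

theorem legendre_eq_zero_of_nonpos (hΦ : ∀ r, 0 ≤ r → 0 ≤ Φ r) (h0 : Φ 0 = 0) {μ : ℝ}
    (hμ : μ ≤ 0) : legendre Φ μ = 0 := by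
  refine IsGreatest.csSup_eq ⟨⟨0, le_rfl, by simp [h0]⟩, ?_⟩
  rintro _ ⟨r, hr, rfl⟩
  nlinarith [hΦ r hr]

theorem tendsto_deriv_atTop_of_superlinear
    (hderiv : ∀ x ∈ Ici (0:ℝ), HasDerivWithinAt Φ (Φ' x) (Ici 0) x)
    (hconv : ConvexOn ℝ (Ici 0) Φ) (h0 : Φ 0 = 0)
    (hsup : Tendsto (fun η => Φ η / η) atTop atTop) : Tendsto Φ' atTop atTop := by
  refine tendsto_atTop_mono' atTop ((eventually_gt_atTop 0).mono fun x hx => ?_) hsup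
  have := hconv.add_mul_sub_le_of_hasDerivWithinAt hx.le self_mem_Ici (hderiv x hx.le)
  rw [div_le_iff₀ hx]
  linarith

theorem isGreatest_legendreValues_of_le_mul_sub
    (hderiv : ∀ x ∈ Ici (0:ℝ), HasDerivWithinAt Φ (Φ' x) (Ici 0) x)
    (hconv : ConvexOn ℝ (Ici 0) Φ) {μ s : ℝ} (hs : 0 ≤ s)
    (hμ : ∀ r, 0 ≤ r → μ * (r - s) ≤ Φ' s * (r - s)) :
    IsGreatest (legendreValues Φ μ) (μ * s - Φ s) := by
  refine ⟨⟨s, hs, rfl⟩, ?_⟩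
  rintro _ ⟨r, hr, rfl⟩
  have := hconv.add_mul_sub_le_of_hasDerivWithinAt hs hr (hderiv s hs)
  linarith [hμ r hr]

theorem isGreatest_legendreValues_lowerInv
    (hderiv : ∀ x ∈ Ici (0:ℝ), HasDerivWithinAt Φ (Φ' x) (Ici 0) x)
    (hconv : ConvexOn ℝ (Ici 0) Φ) (hcont : ContinuousOn Φ' (Ici 0))
    (htop : Tendsto Φ' atTop atTop) (μ : ℝ) :
    IsGreatest (legendreValues Φ μ) (μ * lowerInv Φ' μ - Φ (lowerInv Φ' μ)) := by
  refine isGreatest_legendreValues_of_le_mul_sub hderiv hconv (lowerInv_nonneg Φ' μ) ?_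
  intro r hr
  rcases le_total μ (Φ' 0) with hμ | hμ
  · rw [lowerInv_eq_zero_of_le hμ, sub_zero]
    exact mul_le_mul_of_nonneg_right hμ hr
  · rw [apply_lowerInv hcont htop hμ]

end Legendre

theorem integrable_comp_sub_half_sq_norm {E : Type*} [NormedAddCommGroup E] [ProperSpace E]
    [MeasurableSpace E] [BorelSpace E] {ν : Measure E} [IsFiniteMeasureOnCompacts ν]
    {h : ℝ → ℝ} (hmono : Monotone h) (hzero : ∀ μ ≤ 0, h μ = 0) (lam : ℝ) :
    Integrable (fun v : E => h (lam - ‖v‖^2 / 2)) ν := by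
  have hsupp :
      Function.support (fun v : E => h (lam - ‖v‖^2 / 2)) ⊆ Metric.closedBall 0 (1 + |lam|) := by
    intro v hv
    by_contra hv'
    rw [Metric.mem_closedBall, dist_zero_right, not_le] at hv'
    exact hv (hzero _ (by nlinarith [le_abs_self lam, abs_nonneg lam]))
  rw [← integrableOn_iff_integrable_of_support_subset hsupp]
  refine Measure.integrableOn_of_bounded measure_closedBall_lt_top.ne
    (hmono.measurable.comp (by fun_prop)).aestronglyMeasurable (M := h lam)
    (ae_of_all _ fun v => ?_)
  have hnonneg : 0 ≤ h (lam - ‖v‖^2 / 2) :=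
    (hzero _ (min_le_right _ 0)).symm.le.trans (hmono (min_le_left _ _))
  rw [Real.norm_of_nonneg hnonneg]
  exact hmono (by nlinarith [sq_nonneg ‖v‖])

section Variational

variable {Φ : ℝ → ℝ}

def admissibleEnergies (Φ : ℝ → ℝ) (r : ℝ) : Set ℝ :=
  {y : ℝ | ∃ g : E2 → ℝ, (∀ v, 0 ≤ g v) ∧ Integrable g ∧ (∫ v, g v) = r ∧
    Integrable (fun v : E2 => (1/2) * ‖v‖^2 * g v + Φ (g v)) ∧
    y = ∫ v : E2, ((1/2) * ‖v‖^2 * g v + Φ (g v))}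

theorem redPsi_eq_sInf (Φ : ℝ → ℝ) (r : ℝ) : redPsi Φ r = sInf (admissibleEnergies Φ r) := rfl

theorem admissibleEnergies_nonempty (h0 : Φ 0 = 0) {r : ℝ} (hr : 0 ≤ r) :
    (admissibleEnergies Φ r).Nonempty := by
  set B := Metric.closedBall (0 : E2) 1
  have hB : MeasurableSet B := measurableSet_closedBall
  have hvol : 0 < volume.real B :=
    ENNReal.toReal_pos (Metric.measure_closedBall_pos volume 0 one_pos).ne'
      measure_closedBall_lt_top.ne
  set a := r / volume.real B
  have henergy :
      (fun v => 1/2 * ‖v‖^2 * B.indicator (fun _ => a) v + Φ (B.indicator (fun _ => a) v))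
        = B.indicator fun v => 1/2 * ‖v‖^2 * a + Φ a := by
    ext v; by_cases hv : v ∈ B <;> simp [hv, h0]
  refine ⟨_, B.indicator fun _ => a, indicator_nonneg fun _ _ => div_nonneg hr hvol.le,
    (integrable_indicator_iff hB).2 (integrableOn_const measure_closedBall_lt_top.ne), ?_, ?_, rfl⟩
  · rw [integral_indicator_const _ hB, smul_eq_mul]
    exact mul_div_cancel₀ r hvol.ne'
  · rw [henergy]
    exact (integrable_indicator_iff hB).2
      (ContinuousOn.integrableOn_compact (isCompact_closedBall 0 1) (by fun_prop))

theorem bddBelow_admissibleEnergies (hΦ : ∀ r, 0 ≤ r → 0 ≤ Φ r) (r : ℝ) :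
    BddBelow (admissibleEnergies Φ r) := by
  refine ⟨0, ?_⟩
  rintro _ ⟨g, hg0, -, -, -, rfl⟩
  exact integral_nonneg fun v => add_nonneg (by have := hg0 v; positivity) (hΦ _ (hg0 v))

theorem sub_le_integral_legendre {lam r y : ℝ}
    (hbdd : ∀ v : E2, BddAbove (legendreValues Φ (lam - ‖v‖^2 / 2)))
    (hF : Integrable fun v : E2 => legendre Φ (lam - ‖v‖^2 / 2))
    (hy : y ∈ admissibleEnergies Φ r) :
    lam * r - y ≤ ∫ v : E2, legendre Φ (lam - ‖v‖^2 / 2) := by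
  obtain ⟨g, hg0, hg, rfl, he, rfl⟩ := hy
  rw [← integral_const_mul, ← integral_sub (hg.const_mul lam) he]
  refine integral_mono ((hg.const_mul lam).sub he) hF fun v => ?_
  exact le_csSup (hbdd v) ⟨g v, hg0 v, by ring⟩

theorem legendre_redPsi_of_isGreatest (hΦ : ∀ r, 0 ≤ r → 0 ≤ Φ r) (h0 : Φ 0 = 0) {lam : ℝ}
    {g : E2 → ℝ} (hg0 : ∀ v, 0 ≤ g v) (hg : Integrable g)
    (hF : Integrable fun v : E2 => legendre Φ (lam - ‖v‖^2 / 2))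
    (hmax : ∀ v : E2, IsGreatest (legendreValues Φ (lam - ‖v‖^2 / 2))
      ((lam - ‖v‖^2 / 2) * g v - Φ (g v))) :
    legendre (redPsi Φ) lam = ∫ v : E2, legendre Φ (lam - ‖v‖^2 / 2) := by
  have hFg : ∀ v : E2, legendre Φ (lam - ‖v‖^2 / 2) = lam * g v - (1/2 * ‖v‖^2 * g v + Φ (g v)) :=
    fun v => by rw [legendre_eq_sSup, (hmax v).csSup_eq]; ring
  have he : Integrable fun v : E2 => 1/2 * ‖v‖^2 * g v + Φ (g v) :=
    ((hg.const_mul lam).sub hF).congr (ae_of_all _ fun v => by simp only [Pi.sub_apply, hFg]; ring)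
  have hupper : ∀ r, 0 ≤ r → lam * r - redPsi Φ r ≤ ∫ v : E2, legendre Φ (lam - ‖v‖^2 / 2) := by
    intro r hr
    have hψ := le_csInf (admissibleEnergies_nonempty h0 hr) fun y hy =>
      sub_le_comm.1 (sub_le_integral_legendre (fun v => (hmax v).bddAbove) hF hy)
    rw [redPsi_eq_sInf]
    linarith
  have hattained :
      ∫ v : E2, legendre Φ (lam - ‖v‖^2 / 2) ≤ lam * (∫ v, g v) - redPsi Φ (∫ v, g v) := by
    have hψ := csInf_le (bddBelow_admissibleEnergies hΦ _) ⟨g, hg0, hg, rfl, he, rfl⟩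
    rw [← redPsi_eq_sInf] at hψ
    rw [integral_congr_ae (ae_of_all _ hFg), integral_sub (hg.const_mul lam) he,
      integral_const_mul]
    linarith
  have hmass : 0 ≤ ∫ v, g v := integral_nonneg hg0
  rw [legendre_eq_sSup]
  refine IsGreatest.csSup_eq ⟨⟨_, hmass, le_antisymm hattained (hupper _ hmass)⟩, ?_⟩
  rintro _ ⟨r, hr, rfl⟩
  exact hupper r hr

end Variational

theorem stmt5_general (Φ Φ' : ℝ → ℝ)
    (hderiv : ∀ x ∈ Ici (0:ℝ), HasDerivWithinAt Φ (Φ' x) (Ici 0) x)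
    (hcont : ContinuousOn Φ' (Ici 0))
    (hconv : StrictConvexOn ℝ (Ici 0) Φ)
    (h0 : Φ 0 = 0) (h0' : Φ' 0 = 0)
    (hsup : Tendsto (fun η => Φ η / η) atTop atTop) :
    ∀ lam : ℝ, legendre (redPsi Φ) lam = ∫ v : E2, legendre Φ (lam - ‖v‖^2 / 2) := by
  intro lam
  have hΦ : ∀ r, 0 ≤ r → 0 ≤ Φ r := fun r hr => by
    simpa [h0, h0'] using
      hconv.convexOn.add_mul_sub_le_of_hasDerivWithinAt self_mem_Ici hr (hderiv 0 self_mem_Ici)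
  have htop := tendsto_deriv_atTop_of_superlinear hderiv hconv.convexOn h0 hsup
  have hmax := isGreatest_legendreValues_lowerInv hderiv hconv.convexOn hcont htop
  refine legendre_redPsi_of_isGreatest hΦ h0 (g := fun v => lowerInv Φ' (lam - ‖v‖^2 / 2))
    (fun _ => lowerInv_nonneg _ _) ?_ ?_ fun v => hmax _
  · exact integrable_comp_sub_half_sq_norm (monotone_lowerInv htop)
      (fun μ hμ => lowerInv_eq_zero_of_le (hμ.trans h0'.ge)) lam
  · exact integrable_comp_sub_half_sq_norm (monotone_legendre fun μ => (hmax μ).bddAbove)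
      (fun μ hμ => legendre_eq_zero_of_nonpos hΦ h0 hμ) lam

theorem stmt5 (Φ Φ' : ℝ → ℝ)
    (hderiv : ∀ x ∈ Ici (0:ℝ), HasDerivWithinAt Φ (Φ' x) (Ici 0) x)
    (hcont : ContinuousOn Φ' (Ici 0))
    (hconv : StrictConvexOn ℝ (Ici 0) Φ)
    (hmap : MapsTo Φ (Ici 0) (Ici 0))
    (h0 : Φ 0 = 0) (h0' : Φ' 0 = 0)
    (hsup : Tendsto (fun η => Φ η / η) atTop atTop) :
    ∀ lam : ℝ, legendre (redPsi Φ) lam = ∫ v : E2, legendre Φ (lam - ‖v‖^2 / 2) :=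
  stmt5_general Φ Φ' hderiv hcont hconv h0 h0' hsup

end
end

section
/- Let k > 0, n = k+1, and C > 0. If Φ(f) = C f^{1+1/k} for all f ≥ 0, then the reduced function Ψ(ρ) := inf_{g ∈ G_ρ} ∫_{ℝ²}((1/2)|v|²g + Φ(g)) dv satisfies Ψ(ρ) = C' ρ^{1+1/n} for all ρ ≥ 0 and some constant C' > 0 depending only on C and k. -/
/-!
The rescaling `g ↦ t^k g(·/√t)` multiplies the mass by `t^(k+1)` and, since `Φ` is homogeneous
of degree `1 + 1/k`, multiplies both the kinetic and the potential energy by `t^(k+2)`. Hence the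
set of energies at mass `ρ` is `ρ^(1 + 1/(k+1))` times the set at mass `1`, and `C' = Ψ(1)`.
That `Ψ(1) > 0` is Legendre duality: Young's inequality
`λ g ≤ |v|²g/2 + Φ(g) + Φ*(λ - |v|²/2)` with `Φ*(s) = c s₊^(k+1)` integrates to
`Ψ(1) ≥ λ - c ∫ (λ - |v|²/2)₊^(k+1) dv ≥ λ - O(λ^(k+2))`, which is positive for small `λ`.
-/

open MeasureTheory Real Set Filter

noncomputable section

open Pointwise

-- `redPsi Φ r = sInf (energySet Φ r)` holds by `rfl`
def energySet (Φ : ℝ → ℝ) (r : ℝ) : Set ℝ :=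
  {y : ℝ | ∃ g : E2 → ℝ, (∀ v, 0 ≤ g v) ∧ Integrable g ∧ (∫ v, g v) = r ∧
    Integrable (fun v : E2 => (1/2) * ‖v‖^2 * g v + Φ (g v)) ∧
    y = ∫ v : E2, ((1/2) * ‖v‖^2 * g v + Φ (g v))}

section General

variable {Φ : ℝ → ℝ}

theorem energySet_zero (hΦ : Φ 0 = 0) : energySet Φ 0 = {0} := by
  apply Subset.antisymm
  · rintro y ⟨g, hg0, hgi, hgm, -, rfl⟩
    have hg : g =ᵐ[volume] 0 := (integral_eq_zero_iff_of_nonneg hg0 hgi).1 hgm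
    rw [mem_singleton_iff, ← integral_zero E2 ℝ]
    refine integral_congr_ae ?_
    filter_upwards [hg] with v hv
    simp [hv, hΦ]
  · rintro y rfl
    exact ⟨0, fun _ => le_rfl, integrable_zero _ _ _, integral_zero _ _, by simp [hΦ],
      by simp [hΦ]⟩

theorem energySet_nonempty (hΦ : Φ 0 = 0) {r : ℝ} (hr : 0 ≤ r) : (energySet Φ r).Nonempty := by
  set s : Set E2 := Metric.ball 0 1
  have hs : volume s < ⊤ := measure_ball_lt_top
  have hV : 0 < volume.real s :=
    ENNReal.toReal_pos (Metric.measure_ball_pos volume (0 : E2) one_pos).ne' hs.ne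
  set c := r / volume.real s
  have hc : 0 ≤ c := div_nonneg hr hV.le
  have henergy : (fun v : E2 => (1/2) * ‖v‖^2 * s.indicator (fun _ => c) v
      + Φ (s.indicator (fun _ => c) v)) = s.indicator (fun v => (1/2) * ‖v‖^2 * c + Φ c) := by
    ext v
    by_cases hv : v ∈ s <;> simp [hv, hΦ]
  refine ⟨_, s.indicator fun _ => c, indicator_nonneg (fun _ _ => hc),
    (integrable_indicator_iff measurableSet_ball).2 (integrableOn_const hs.ne), ?_, ?_, rfl⟩
  · rw [integral_indicator_const _ measurableSet_ball, smul_eq_mul, mul_div_cancel₀ _ hV.ne']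
  · rw [henergy, integrable_indicator_iff measurableSet_ball]
    exact ((continuous_const.mul (continuous_norm.pow 2)).mul continuous_const).add
      continuous_const |>.continuousOn.integrableOn_compact (isCompact_closedBall 0 1)
      |>.mono_set Metric.ball_subset_closedBall

theorem mul_sub_integral_le_of_mem_energySet {Φstar : ℝ → ℝ}
    (hyoung : ∀ s x, 0 ≤ x → s * x ≤ Φ x + Φstar s) {lam : ℝ}
    (hint : Integrable fun v : E2 => Φstar (lam - (1/2) * ‖v‖^2)) {r y : ℝ}
    (hy : y ∈ energySet Φ r) : lam * r - ∫ v : E2, Φstar (lam - (1/2) * ‖v‖^2) ≤ y := by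
  obtain ⟨g, hg0, hgi, rfl, hfi, rfl⟩ := hy
  have hpointwise : ∀ v : E2, lam * g v ≤
      ((1/2) * ‖v‖^2 * g v + Φ (g v)) + Φstar (lam - (1/2) * ‖v‖^2) := fun v => by
    linarith [hyoung (lam - (1/2) * ‖v‖^2) (g v) (hg0 v)]
  have := integral_mono (hgi.const_mul lam) (hfi.add hint) hpointwise
  rw [integral_const_mul, integral_add' hfi hint] at this
  linarith

end General

section Bump

variable {q lam : ℝ}

theorem posPart_sub_sq_rpow_eq_zero (hq : 0 < q) {v : E2}
    (hv : v ∉ Metric.closedBall 0 √(2 * lam)) : (max (lam - (1/2) * ‖v‖^2) 0) ^ q = 0 := by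
  rw [Metric.mem_closedBall, dist_zero_right, not_le] at hv
  rw [max_eq_right (by linarith [lt_sq_of_sqrt_lt hv]), zero_rpow hq.ne']

theorem integrable_posPart_sub_sq_rpow (hq : 0 < q) :
    Integrable fun v : E2 => (max (lam - (1/2) * ‖v‖^2) 0) ^ q :=
  Continuous.integrable_of_hasCompactSupport
    (((continuous_const.sub (continuous_const.mul (continuous_norm.pow 2))).max
      continuous_const).rpow_const fun _ => Or.inr hq.le)
    (HasCompactSupport.intro (isCompact_closedBall 0 _)
      fun _ => posPart_sub_sq_rpow_eq_zero hq)

theorem integral_posPart_sub_sq_rpow_le (hq : 0 < q) (hlam : 0 ≤ lam) :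
    ∫ v : E2, (max (lam - (1/2) * ‖v‖^2) 0) ^ q
      ≤ volume.real (Metric.ball (0 : E2) 1) * (2 * lam) * lam ^ q := by
  set B := Metric.closedBall (0 : E2) √(2 * lam)
  have hbound : ∀ v, (max (lam - (1/2) * ‖v‖^2) 0) ^ q ≤ B.indicator (fun _ => lam ^ q) v := by
    intro v
    by_cases hv : v ∈ B
    · rw [indicator_of_mem hv]
      exact rpow_le_rpow (le_max_right _ _)
        (max_le (by nlinarith [sq_nonneg ‖v‖]) hlam) hq.le
    · rw [indicator_of_notMem hv, posPart_sub_sq_rpow_eq_zero hq hv]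
  have hvol : volume.real B = volume.real (Metric.ball (0 : E2) 1) * (2 * lam) := by
    rw [measureReal_def, Measure.addHaar_closedBall volume 0 (sqrt_nonneg _),
      finrank_euclideanSpace_fin, ENNReal.toReal_mul, ENNReal.toReal_ofReal (by positivity),
      sq_sqrt (by positivity), measureReal_def, mul_comm]
  calc _ ≤ ∫ v, B.indicator (fun _ => lam ^ q) v :=
        integral_mono (integrable_posPart_sub_sq_rpow hq)
          ((integrable_indicator_iff measurableSet_closedBall).2
            (integrableOn_const measure_closedBall_lt_top.ne)) hbound
    _ = _ := by rw [integral_indicator_const _ measurableSet_closedBall, smul_eq_mul, hvol]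

end Bump

section PowerLaw

variable {k C : ℝ}

def powerLaw (C k : ℝ) (f : ℝ) : ℝ := C * f ^ (1 + 1/k)

theorem powerLaw_zero (hk : 0 < k) : powerLaw C k 0 = 0 := by
  rw [powerLaw, zero_rpow (by positivity), mul_zero]

theorem exists_mul_le_powerLaw_add (hk : 0 < k) (hC : 0 < C) :
    ∃ c > 0, ∀ s x : ℝ, 0 ≤ x → s * x ≤ powerLaw C k x + c * (max s 0) ^ (k + 1) := by
  set p : ℝ := 1 + 1/k
  have hpq : p.HolderConjugate (k + 1) := by
    rw [Real.holderConjugate_iff]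
    exact ⟨by simp [p, hk], by simp only [p]; field_simp⟩
  have hCp : 0 < C * p := mul_pos hC hpq.pos
  -- rescale so that Young's inequality `a b ≤ a^p/p + b^q/q` produces the coefficient `C`
  set α : ℝ := (C * p) ^ (-(1/p))
  have hα : 0 < α := rpow_pos_of_pos hCp _
  have hαp : α ^ p = (C * p)⁻¹ := by
    rw [← rpow_mul hCp.le, neg_mul, one_div_mul_cancel hpq.ne_zero, rpow_neg_one]
  refine ⟨α ^ (k + 1) / (k + 1), by positivity, fun s x hx => ?_⟩
  have hs : 0 ≤ max s 0 := le_max_right s 0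
  have hyoung := Real.young_inequality_of_nonneg (div_nonneg hx hα.le) (mul_nonneg hs hα.le) hpq
  rw [div_rpow hx hα.le, hαp, mul_rpow hs hα.le] at hyoung
  calc s * x ≤ max s 0 * x := mul_le_mul_of_nonneg_right (le_max_left s 0) hx
    _ = x / α * (max s 0 * α) := by field_simp
    _ ≤ _ := hyoung
    _ = powerLaw C k x + α ^ (k + 1) / (k + 1) * max s 0 ^ (k + 1) := by
      simp only [powerLaw, p]; field_simp

theorem exists_pos_le_of_mem_energySet_one (hk : 0 < k) (hC : 0 < C) :
    ∃ ε > 0, ∀ y ∈ energySet (powerLaw C k) 1, ε ≤ y := by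
  obtain ⟨c, hc, hyoung⟩ := exists_mul_le_powerLaw_add hk hC
  have hk1 : 0 < k + 1 := by linarith
  set V := volume.real (Metric.ball (0 : E2) 1)
  have hV : 0 < V := ENNReal.toReal_pos (Metric.measure_ball_pos volume (0 : E2) one_pos).ne'
    measure_ball_lt_top.ne
  -- choose `lam` so that the dual term `c ∫ (lam - |v|²/2)₊^(k+1) ≤ 2cV lam^(k+2)` is `≤ lam / 2`
  set lam := (4 * c * V) ^ (-1 / (k + 1))
  have hlam : 0 < lam := by positivity
  have hlam_pow : 4 * c * V * lam ^ (k + 1) = 1 := by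
    rw [← rpow_mul (by positivity), div_mul_cancel₀ _ hk1.ne', rpow_neg_one,
      mul_inv_cancel₀ (by positivity)]
  refine ⟨lam / 2, by positivity, fun y hy => ?_⟩
  have hlow := mul_sub_integral_le_of_mem_energySet (Φstar := fun s => c * max s 0 ^ (k + 1))
    hyoung ((integrable_posPart_sub_sq_rpow (lam := lam) hk1).const_mul c) hy
  have hup := mul_le_mul_of_nonneg_left (integral_posPart_sub_sq_rpow_le hk1 hlam.le) hc.le
  rw [integral_const_mul] at hlow
  have hdual : c * (V * (2 * lam) * lam ^ (k + 1)) = lam / 2 := by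
    linear_combination (lam / 2) * hlam_pow
  linarith

theorem rpow_mul_mem_energySet_rpow_mul (hk : 0 < k) {t r y : ℝ} (ht : 0 < t)
    (hy : y ∈ energySet (powerLaw C k) r) :
    t ^ (k + 2) * y ∈ energySet (powerLaw C k) (t ^ (k + 1) * r) := by
  obtain ⟨g, hg0, hgi, rfl, hfi, rfl⟩ := hy
  set b := √t
  have hb : b ≠ 0 := (sqrt_pos.2 ht).ne'
  have hb2 : b ^ 2 = t := sq_sqrt ht.le
  have hsub : ∀ F : E2 → ℝ, ∫ v, F (b⁻¹ • v) = t * ∫ v, F v := fun F => by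
    rw [Measure.integral_comp_inv_smul, finrank_euclideanSpace_fin, smul_eq_mul, abs_of_nonneg
      (sq_nonneg b), hb2]
  have hsubi : ∀ F : E2 → ℝ, Integrable F → Integrable fun v => F (b⁻¹ • v) :=
    fun F hF => (integrable_comp_smul_iff volume F (inv_ne_zero hb)).2 hF
  set E : E2 → ℝ := fun w => (1/2) * ‖w‖^2 * g w + powerLaw C k (g w)
  -- kinetic and potential energy of `t^k g(v/√t)` both scale like `t^(k+1)` pointwise
  have hE : (fun v : E2 => (1/2) * ‖v‖^2 * (t ^ k * g (b⁻¹ • v))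
      + powerLaw C k (t ^ k * g (b⁻¹ • v))) = fun v => t ^ (k + 1) * E (b⁻¹ • v) := by
    ext v
    have hnorm : ‖b⁻¹ • v‖ ^ 2 = ‖v‖ ^ 2 / t := by
      rw [norm_smul, mul_pow, norm_inv, norm_eq_abs, inv_pow, sq_abs, hb2, inv_mul_eq_div]
    simp only [E, powerLaw, hnorm, mul_rpow (rpow_nonneg ht.le k) (hg0 _), ← rpow_mul ht.le,
      mul_add, mul_one, mul_one_div_cancel hk.ne', rpow_add_one ht.ne']
    field_simp
  refine ⟨fun v => t ^ k * g (b⁻¹ • v), fun v => mul_nonneg (rpow_nonneg ht.le k) (hg0 _),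
    (hsubi g hgi).const_mul _, ?_, ?_, ?_⟩
  · rw [integral_const_mul, hsub, ← mul_assoc, ← rpow_add_one ht.ne']
  · rw [hE]
    exact (hsubi E hfi).const_mul _
  · rw [hE, integral_const_mul, hsub, ← mul_assoc, ← rpow_add_one ht.ne', add_assoc]
    norm_num

theorem rpow_mul_mem_energySet_mul (hk : 0 < k) {m r y : ℝ} (hm : 0 < m)
    (hy : y ∈ energySet (powerLaw C k) r) :
    m ^ (1 + 1/(k+1)) * y ∈ energySet (powerLaw C k) (m * r) := by
  have hk1 : k + 1 ≠ 0 := by positivity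
  have hscaled := rpow_mul_mem_energySet_rpow_mul hk (rpow_pos_of_pos hm (1 / (k + 1))) hy
  rwa [← rpow_mul hm.le, ← rpow_mul hm.le, one_div_mul_cancel hk1,
    show 1 / (k + 1) * (k + 2) = 1 + 1 / (k + 1) by field_simp; ring, rpow_one] at hscaled

theorem energySet_eq_rpow_smul (hk : 0 < k) {ρ : ℝ} (hρ : 0 < ρ) :
    energySet (powerLaw C k) ρ = ρ ^ (1 + 1/(k+1)) • energySet (powerLaw C k) 1 := by
  ext y
  constructor
  · intro hy
    have hscaled := rpow_mul_mem_energySet_mul hk (inv_pos.2 hρ) hy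
    rw [inv_mul_cancel₀ hρ.ne'] at hscaled
    refine ⟨_, hscaled, ?_⟩
    dsimp only
    rw [smul_eq_mul, ← mul_assoc, ← mul_rpow hρ.le (inv_nonneg.2 hρ.le), mul_inv_cancel₀ hρ.ne',
      one_rpow, one_mul]
  · rintro ⟨z, hz, rfl⟩
    simpa using rpow_mul_mem_energySet_mul hk hρ hz

end PowerLaw

theorem stmt7 (k C : ℝ) (hk : 0 < k) (hC : 0 < C) :
    ∃ C' : ℝ, 0 < C' ∧ ∀ ρ : ℝ, 0 ≤ ρ →
      redPsi (fun f => C * f ^ (1 + 1/k)) ρ = C' * ρ ^ (1 + 1/(k+1)) := by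
  obtain ⟨ε, hε, hlow⟩ := exists_pos_le_of_mem_energySet_one hk hC
  refine ⟨sInf (energySet (powerLaw C k) 1),
    hε.trans_le (le_csInf (energySet_nonempty (powerLaw_zero hk) zero_le_one) hlow),
    fun ρ hρ => ?_⟩
  show sInf (energySet (powerLaw C k) ρ) = _
  rcases hρ.eq_or_lt with rfl | hρ
  · rw [energySet_zero (powerLaw_zero hk), csInf_singleton, zero_rpow (by positivity), mul_zero]
  · rw [energySet_eq_rpow_smul hk hρ, Real.sInf_smul_of_nonneg (rpow_nonneg hρ.le _),
      smul_eq_mul, mul_comm]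
end
end
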